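/- Let 𝔤 be an arbitrary 4-dimensional real Lie algebra with basis X₁, X₂, X₃, X₄ and structure constants C_{ij}^k (so [X_i,X_j] = Σ_k C_{ij}^k X_k), equipped with the metric g and complex structure J of the standard construction, with ∇ the Koszul connection, F the covariant derivative tensor, N the Nijenhuis tensor, and θ the Lie form. Then N = 0 and θ = 0 (i.e., (G,J,g) is a W₂-manifold) if and only if the structure constants satisfy: C¹₁₃ = C⁴₁₂ − C²₂₃ = C⁴₃₄ − C²₁₄; C³₁₃ = −(C²₁₂ + C⁴₂₃) = −(C⁴₁₄ + C²₃₄); C⁴₂₄ = C¹₁₂ − C³₁₄ = C¹₃₄ − C³₂₃; and C²₂₄ = −(C³₁₂ + C¹₁₄) = −(C¹₂₃ + C³₃₄). -/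

import Mathlib

noncomputable section

namespace Norden

/-- The underlying 4-dimensional real vector space. -/
abbrev V : Type := Fin 4 → ℝ

/-- The basis `X₁, X₂, X₃, X₄` (0-indexed as `X 0, X 1, X 2, X 3`). -/
def X (i : Fin 4) : V := Pi.single i 1

/-- The signature signs `ε₁ = ε₂ = 1`, `ε₃ = ε₄ = -1` of the Norden metric. -/
def eps : Fin 4 → ℝ := ![1, 1, -1, -1]

/-- The Norden metric `g`, diagonal with entries `ε_i` in the basis `X`. -/
def g (x y : V) : ℝ := ∑ i, eps i * x i * y i

/-- The almost complex structure `J` with `JX₁ = X₃`, `JX₂ = X₄`, `JX₃ = -X₁`, `JX₄ = -X₂`. -/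
def J (x : V) : V := ![-x 2, -x 3, x 0, x 1]

/-- The bilinear bracket with structure constants `C`, i.e. `[X_i, X_j] = Σ_k C_{ij}^k X_k`
(here `brC C x y k = Σ_{i,j} x_i y_j C_{ij}^k`, with `C i j k = C_{ij}^k` 0-indexed). -/
def brC (C : Fin 4 → Fin 4 → Fin 4 → ℝ) (x y : V) : V :=
  fun k => ∑ i, ∑ j, x i * y j * C i j k

/-- The Koszul (Levi-Civita) connection of `g` for the bracket `brC C`: the unique
bilinear map with `2g(∇ₓy, z) = g([x,y],z) + g([z,x],y) + g([z,y],x)`, written out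
componentwise using that `g` is diagonal with entries `ε_k` (so `v_k = ε_k g(v, X_k)`). -/
def nablaC (C : Fin 4 → Fin 4 → Fin 4 → ℝ) (x y : V) : V :=
  fun k => eps k * (1 / 2) *
    (g (brC C x y) (X k) + g (brC C (X k) x) y + g (brC C (X k) y) x)

/-- The tensor `F(x,y,z) = g((∇ₓJ)y, z) = g(∇ₓ(Jy) - J(∇ₓy), z)`. -/
def FC (C : Fin 4 → Fin 4 → Fin 4 → ℝ) (x y z : V) : ℝ :=
  g (nablaC C x (J y) - J (nablaC C x y)) z

/-- The Nijenhuis tensor `N(x,y) = [Jx,Jy] - [x,y] - J[Jx,y] - J[x,Jy]`. -/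
def NijC (C : Fin 4 → Fin 4 → Fin 4 → ℝ) (x y : V) : V :=
  brC C (J x) (J y) - brC C x y - J (brC C (J x) y) - J (brC C x (J y))

/-- The Lie form `θ(x) = Σ_i ε_i F(X_i, X_i, x)` (the `g`-trace of `F`). -/
def thetaC (C : Fin 4 → Fin 4 → Fin 4 → ℝ) (x : V) : ℝ :=
  FC C (X 0) (X 0) x + FC C (X 1) (X 1) x - FC C (X 2) (X 2) x - FC C (X 3) (X 3) x

end Norden

end

set_option maxHeartbeats 16000000 in
open Norden in
/-- Let `𝔤` be an arbitrary 4-dimensional real Lie algebra with basis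
`X₁,…,X₄` and structure constants `C_{ij}^k`, with the standard `g`, `J`, Koszul
connection `∇`, tensor `F`, Nijenhuis tensor `N` and Lie form `θ`. Then `N = 0` and
`θ = 0` (i.e. `(G,J,g)` is a `W₂`-manifold) if and only if:
`C¹₁₃ = C⁴₁₂ - C²₂₃ = C⁴₃₄ - C²₁₄`, `C³₁₃ = -(C²₁₂ + C⁴₂₃) = -(C⁴₁₄ + C²₃₄)`,
`C⁴₂₄ = C¹₁₂ - C³₁₄ = C¹₃₄ - C³₂₃` and `C²₂₄ = -(C³₁₂ + C¹₁₄) = -(C¹₂₃ + C³₃₄)`. -/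
theorem statement1 (C : Fin 4 → Fin 4 → Fin 4 → ℝ)
    (hanti : ∀ i j k, C i j k = -C j i k)
    (hjacobi : ∀ x y z : V,
      brC C x (brC C y z) + brC C y (brC C z x) + brC C z (brC C x y) = 0) :
    ((∀ x y : V, NijC C x y = 0) ∧ (∀ x : V, thetaC C x = 0)) ↔
    (C 0 2 0 = C 0 1 3 - C 1 2 1 ∧ C 0 2 0 = C 2 3 3 - C 0 3 1 ∧
     C 0 2 2 = -(C 0 1 1 + C 1 2 3) ∧ C 0 2 2 = -(C 0 3 3 + C 2 3 1) ∧
     C 1 3 3 = C 0 1 0 - C 0 3 2 ∧ C 1 3 3 = C 2 3 0 - C 1 2 2 ∧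
     C 1 3 1 = -(C 0 1 2 + C 0 3 0) ∧ C 1 3 1 = -(C 1 2 0 + C 2 3 2)) := by
  constructor
  · rintro ⟨hN, hT⟩
    have e0 := congrFun (hN (X 0) (X 1)) 0
    have e1 := congrFun (hN (X 0) (X 1)) 1
    have e2 := congrFun (hN (X 0) (X 1)) 2
    have e3 := congrFun (hN (X 0) (X 1)) 3
    have t0 := hT (X 0)
    have t1 := hT (X 1)
    have t2 := hT (X 2)
    have t3 := hT (X 3)
    simp [NijC, brC, J, X, g, eps, Fin.sum_univ_four, Pi.single_apply,
      Matrix.vecHead, Matrix.vecTail] at e0 e1 e2 e3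
    simp [thetaC, FC, nablaC, brC, J, X, g, eps, Fin.sum_univ_four, Pi.single_apply, Matrix.vecHead, Matrix.vecTail] at t0
    simp [thetaC, FC, nablaC, brC, J, X, g, eps, Fin.sum_univ_four, Pi.single_apply, Matrix.vecHead, Matrix.vecTail] at t1
    simp [thetaC, FC, nablaC, brC, J, X, g, eps, Fin.sum_univ_four, Pi.single_apply, Matrix.vecHead, Matrix.vecTail] at t2
    simp [thetaC, FC, nablaC, brC, J, X, g, eps, Fin.sum_univ_four, Pi.single_apply, Matrix.vecHead, Matrix.vecTail] at t3
    refine ⟨?_, ?_, ?_, ?_, ?_, ?_, ?_, ?_⟩ <;>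
      linarith [hanti 0 0 0, hanti 0 1 0, hanti 1 1 0, hanti 0 2 0, hanti 1 2 0, hanti 2 2 0, hanti 0 3 0, hanti 1 3 0, hanti 2 3 0, hanti 3 3 0, hanti 0 0 1, hanti 0 1 1, hanti 1 1 1, hanti 0 2 1, hanti 1 2 1, hanti 2 2 1, hanti 0 3 1, hanti 1 3 1, hanti 2 3 1, hanti 3 3 1, hanti 0 0 2, hanti 0 1 2, hanti 1 1 2, hanti 0 2 2, hanti 1 2 2, hanti 2 2 2, hanti 0 3 2, hanti 1 3 2, hanti 2 3 2, hanti 3 3 2, hanti 0 0 3, hanti 0 1 3, hanti 1 1 3, hanti 0 2 3, hanti 1 2 3, hanti 2 2 3, hanti 0 3 3, hanti 1 3 3, hanti 2 3 3, hanti 3 3 3]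
  · rintro ⟨h1, h2, h3, h4, h5, h6, h7, h8⟩
    constructor
    · intro x y
      have H0 : NijC C x y 0 = 0 := by
        simp [NijC, brC, J, g, eps, Fin.sum_univ_four, Matrix.vecHead, Matrix.vecTail, show (Fin.succ 2 : Fin 4) = 3 from rfl]
        linear_combination (1/2) * x 2 * y 2 * hanti 0 0 0 + (-1/2) * x 0 * y 0 * hanti 0 0 0 + (-1/2) * x 2 * y 0 * hanti 0 0 2 + (-1/2) * x 0 * y 2 * hanti 0 0 2 + x 3 * y 2 * hanti 1 0 0 + (-1) * x 1 * y 0 * hanti 1 0 0 + (-1) * x 3 * y 0 * hanti 1 0 2 + (-1) * x 1 * y 2 * hanti 1 0 2 + (-1) * x 0 * y 2 * hanti 2 0 0 + (-1) * x 2 * y 0 * hanti 2 0 0 + x 0 * y 0 * hanti 2 0 2 + (-1) * x 2 * y 2 * hanti 2 0 2 + (-1) * x 1 * y 2 * hanti 3 0 0 + (-1) * x 3 * y 0 * hanti 3 0 0 + x 1 * y 0 * hanti 3 0 2 + (-1) * x 3 * y 2 * hanti 3 0 2 + (1/2) * x 3 * y 3 * hanti 1 1 0 + (-1/2) * x 1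 * y 1 * hanti 1 1 0 + (-1/2) * x 3 * y 1 * hanti 1 1 2 + (-1/2) * x 1 * y 3 * hanti 1 1 2 + (-1) * x 0 * y 3 * hanti 2 1 0 + (-1) * x 2 * y 1 * hanti 2 1 0 + x 0 * y 1 * hanti 2 1 2 + (-1) * x 2 * y 3 * hanti 2 1 2 + (-1) * x 1 * y 3 * hanti 3 1 0 + (-1) * x 3 * y 1 * hanti 3 1 0 + x 1 * y 1 * hanti 3 1 2 + (-1) * x 3 * y 3 * hanti 3 1 2 + (1/2) * x 0 * y 0 * hanti 2 2 0 + (-1/2) * x 2 * y 2 * hanti 2 2 0 + (1/2) * x 0 * y 2 * hanti 2 2 2 + (1/2) * x 2 * y 0 * hanti 2 2 2 + x 1 * y 0 * hanti 3 2 0 + (-1) * x 3 * y 2 * hanti 3 2 0 + x 1 * y 2 * hanti 3 2 2 + x 3 * y 0 * hanti 3 2 2 + (1/2) * x 1 * y 1 * hanti 3 3 0 + (-1/2) * x 3 * y 3 * hanti 3 3 0 + (1/2) * x 1 * y 3 * hanti 3 3 2 + (1/2) * x 3 * y 1 * hanti 3 3 2 + x 0 * y 1 * h5 + (-1) * x 0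 * y 1 * h6 + (-1) * x 0 * y 3 * h7 + x 0 * y 3 * h8 + (-1) * x 1 * y 0 * h5 + x 1 * y 0 * h6 + x 1 * y 2 * h7 + (-1) * x 1 * y 2 * h8 + (-1) * x 2 * y 1 * h7 + x 2 * y 1 * h8 + (-1) * x 2 * y 3 * h5 + x 2 * y 3 * h6 + x 3 * y 0 * h7 + (-1) * x 3 * y 0 * h8 + x 3 * y 2 * h5 + (-1) * x 3 * y 2 * h6
      have H1 : NijC C x y 1 = 0 := by
        simp [NijC, brC, J, g, eps, Fin.sum_univ_four, Matrix.vecHead, Matrix.vecTail, show (Fin.succ 2 : Fin 4) = 3 from rfl]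
        linear_combination (1/2) * x 2 * y 2 * hanti 0 0 1 + (-1/2) * x 0 * y 0 * hanti 0 0 1 + (-1/2) * x 2 * y 0 * hanti 0 0 3 + (-1/2) * x 0 * y 2 * hanti 0 0 3 + x 3 * y 2 * hanti 1 0 1 + (-1) * x 1 * y 0 * hanti 1 0 1 + (-1) * x 3 * y 0 * hanti 1 0 3 + (-1) * x 1 * y 2 * hanti 1 0 3 + (-1) * x 0 * y 2 * hanti 2 0 1 + (-1) * x 2 * y 0 * hanti 2 0 1 + x 0 * y 0 * hanti 2 0 3 + (-1) * x 2 * y 2 * hanti 2 0 3 + (-1) * x 1 * y 2 * hanti 3 0 1 + (-1) * x 3 * y 0 * hanti 3 0 1 + x 1 * y 0 * hanti 3 0 3 + (-1) * x 3 * y 2 * hanti 3 0 3 + (1/2) * x 3 * y 3 * hanti 1 1 1 + (-1/2) * x 1 * y 1 * hanti 1 1 1 + (-1/2) * x 3 * y 1 * hanti 1 1 3 + (-1/2) * x 1 * y 3 * hanti 1 1 3 + (-1) * x 0 * y 3 * hanti 2 1 1 + (-1) * x 2 * y 1 * hanti 2 1 1 + x 0 * y 1 * hanti 2 1 3 + (-1)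 * x 2 * y 3 * hanti 2 1 3 + (-1) * x 1 * y 3 * hanti 3 1 1 + (-1) * x 3 * y 1 * hanti 3 1 1 + x 1 * y 1 * hanti 3 1 3 + (-1) * x 3 * y 3 * hanti 3 1 3 + (1/2) * x 0 * y 0 * hanti 2 2 1 + (-1/2) * x 2 * y 2 * hanti 2 2 1 + (1/2) * x 0 * y 2 * hanti 2 2 3 + (1/2) * x 2 * y 0 * hanti 2 2 3 + x 1 * y 0 * hanti 3 2 1 + (-1) * x 3 * y 2 * hanti 3 2 1 + x 1 * y 2 * hanti 3 2 3 + x 3 * y 0 * hanti 3 2 3 + (1/2) * x 1 * y 1 * hanti 3 3 1 + (-1/2) * x 3 * y 3 * hanti 3 3 1 + (1/2) * x 1 * y 3 * hanti 3 3 3 + (1/2) * x 3 * y 1 * hanti 3 3 3 + (-1) * x 0 * y 1 * h3 + x 0 * y 1 * h4 + x 0 * y 3 * h1 + (-1) * x 0 * y 3 * h2 + x 1 * y 0 * h3 + (-1) * x 1 * y 0 * h4 + (-1) * x 1 * y 2 * h1 + x 1 * y 2 * h2 + x 2 * y 1 * h1 + (-1) * x 2 * y 1 * h2 + x 2 * y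 3 * h3 + (-1) * x 2 * y 3 * h4 + (-1) * x 3 * y 0 * h1 + x 3 * y 0 * h2 + (-1) * x 3 * y 2 * h3 + x 3 * y 2 * h4
      have H2 : NijC C x y 2 = 0 := by
        simp [NijC, brC, J, g, eps, Fin.sum_univ_four, Matrix.vecHead, Matrix.vecTail, show (Fin.succ 2 : Fin 4) = 3 from rfl]
        linear_combination (1/2) * x 2 * y 0 * hanti 0 0 0 + (1/2) * x 0 * y 2 * hanti 0 0 0 + (1/2) * x 2 * y 2 * hanti 0 0 2 + (-1/2) * x 0 * y 0 * hanti 0 0 2 + x 3 * y 0 * hanti 1 0 0 + x 1 * y 2 * hanti 1 0 0 + x 3 * y 2 * hanti 1 0 2 + (-1) * x 1 * y 0 * hanti 1 0 2 + (-1) * x 0 * y 0 * hanti 2 0 0 + x 2 * y 2 * hanti 2 0 0 + (-1) * x 0 * y 2 * hanti 2 0 2 + (-1) * x 2 * y 0 * hanti 2 0 2 + (-1) * x 1 * y 0 * hanti 3 0 0 + x 3 * y 2 * hanti 3 0 0 + (-1) * x 1 * y 2 * hanti 3 0 2 + (-1) * x 3 * y 0 * hanti 3 0 2 + (1/2) *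 x 3 * y 1 * hanti 1 1 0 + (1/2) * x 1 * y 3 * hanti 1 1 0 + (1/2) * x 3 * y 3 * hanti 1 1 2 + (-1/2) * x 1 * y 1 * hanti 1 1 2 + (-1) * x 0 * y 1 * hanti 2 1 0 + x 2 * y 3 * hanti 2 1 0 + (-1) * x 0 * y 3 * hanti 2 1 2 + (-1) * x 2 * y 1 * hanti 2 1 2 + (-1) * x 1 * y 1 * hanti 3 1 0 + x 3 * y 3 * hanti 3 1 0 + (-1) * x 1 * y 3 * hanti 3 1 2 + (-1) * x 3 * y 1 * hanti 3 1 2 + (-1/2) * x 0 * y 2 * hanti 2 2 0 + (-1/2) * x 2 * y 0 * hanti 2 2 0 + (1/2) * x 0 * y 0 * hanti 2 2 2 + (-1/2) * x 2 * y 2 * hanti 2 2 2 + (-1) * x 1 * y 2 * hanti 3 2 0 + (-1) * x 3 * y 0 * hanti 3 2 0 + x 1 * y 0 * hanti 3 2 2 + (-1) * x 3 * y 2 * hanti 3 2 2 + (-1/2) * x 1 * y 3 * hanti 3 3 0 + (-1/2) * x 3 * y 1 * hanti 3 3 0 + (1/2) * x 1 * y 1 * hanti 3 3 2 + (-1/2)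 * x 3 * y 3 * hanti 3 3 2 + (-1) * x 0 * y 1 * h7 + x 0 * y 1 * h8 + (-1) * x 0 * y 3 * h5 + x 0 * y 3 * h6 + x 1 * y 0 * h7 + (-1) * x 1 * y 0 * h8 + x 1 * y 2 * h5 + (-1) * x 1 * y 2 * h6 + (-1) * x 2 * y 1 * h5 + x 2 * y 1 * h6 + x 2 * y 3 * h7 + (-1) * x 2 * y 3 * h8 + x 3 * y 0 * h5 + (-1) * x 3 * y 0 * h6 + (-1) * x 3 * y 2 * h7 + x 3 * y 2 * h8
      have H3 : NijC C x y 3 = 0 := by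
        simp [NijC, brC, J, g, eps, Fin.sum_univ_four, Matrix.vecHead, Matrix.vecTail, show (Fin.succ 2 : Fin 4) = 3 from rfl]
        linear_combination (1/2) * x 2 * y 0 * hanti 0 0 1 + (1/2) * x 0 * y 2 * hanti 0 0 1 + (1/2) * x 2 * y 2 * hanti 0 0 3 + (-1/2) * x 0 * y 0 * hanti 0 0 3 + x 3 * y 0 * hanti 1 0 1 + x 1 * y 2 * hanti 1 0 1 + x 3 * y 2 * hanti 1 0 3 + (-1) * x 1 * y 0 * hanti 1 0 3 + (-1) * x 0 * y 0 * hanti 2 0 1 + x 2 * y 2 * hanti 2 0 1 + (-1) * x 0 * y 2 * hanti 2 0 3 + (-1) * x 2 * y 0 * hanti 2 0 3 + (-1) * x 1 * y 0 * hanti 3 0 1 + x 3 * y 2 * hanti 3 0 1 + (-1) * x 1 * y 2 * hanti 3 0 3 + (-1) * x 3 * y 0 * hanti 3 0 3 + (1/2) * x 3 * y 1 * hanti 1 1 1 + (1/2) * x 1 * y 3 * hanti 1 1 1 + (1/2) * x 3 * y 3 * hanti 1 1 3 + (-1/2) * x 1 * y 1 * hanti 1 1 3 + (-1) * x 0 *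 y 1 * hanti 2 1 1 + x 2 * y 3 * hanti 2 1 1 + (-1) * x 0 * y 3 * hanti 2 1 3 + (-1) * x 2 * y 1 * hanti 2 1 3 + (-1) * x 1 * y 1 * hanti 3 1 1 + x 3 * y 3 * hanti 3 1 1 + (-1) * x 1 * y 3 * hanti 3 1 3 + (-1) * x 3 * y 1 * hanti 3 1 3 + (-1/2) * x 0 * y 2 * hanti 2 2 1 + (-1/2) * x 2 * y 0 * hanti 2 2 1 + (1/2) * x 0 * y 0 * hanti 2 2 3 + (-1/2) * x 2 * y 2 * hanti 2 2 3 + (-1) * x 1 * y 2 * hanti 3 2 1 + (-1) * x 3 * y 0 * hanti 3 2 1 + x 1 * y 0 * hanti 3 2 3 + (-1) * x 3 * y 2 * hanti 3 2 3 + (-1/2) * x 1 * y 3 * hanti 3 3 1 + (-1/2) * x 3 * y 1 * hanti 3 3 1 + (1/2) * x 1 * y 1 * hanti 3 3 3 + (-1/2) * x 3 * y 3 * hanti 3 3 3 + x 0 * y 1 * h1 + (-1) * x 0 * y 1 * h2 + x 0 * y 3 * h3 + (-1) * x 0 * y 3 * h4 + (-1) * x 1 * y 0 * h1 + x 1 *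 y 0 * h2 + (-1) * x 1 * y 2 * h3 + x 1 * y 2 * h4 + x 2 * y 1 * h3 + (-1) * x 2 * y 1 * h4 + (-1) * x 2 * y 3 * h1 + x 2 * y 3 * h2 + (-1) * x 3 * y 0 * h3 + x 3 * y 0 * h4 + x 3 * y 2 * h1 + (-1) * x 3 * y 2 * h2
      funext k
      fin_cases k
      · exact H0
      · exact H1
      · exact H2
      · exact H3
    · intro x
      simp [thetaC, FC, nablaC, brC, J, X, g, eps, Fin.sum_univ_four, Pi.single_apply, Matrix.vecHead, Matrix.vecTail]
      linear_combination (3/4) * x 2 * hanti 0 0 0 + (1/4) * x 3 * hanti 0 0 1 + (-1/4) * x 0 * hanti 0 0 2 + (1/4) * x 1 * hanti 0 0 3 + (-1/2) * x 0 * hanti 2 0 0 + (1/2) * x 1 * hanti 2 0 1 + (-3/2) * x 2 * hanti 2 0 2 + (-1/2) * x 3 * hanti 2 0 3 + (1/4) * x 2 * hanti 1 1 0 + (3/4) * x 3 * hanti 1 1 1 + (1/4) * x 0 * hanti 1 1 2 + (-1/4) * x 1 * hanti 1 1 3 + (1/2) * x 0 * hanti 3 1 0 + (-1/2) * x 1 *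 hanti 3 1 1 + (-1/2) * x 2 * hanti 3 1 2 + (-3/2) * x 3 * hanti 3 1 3 + (1/4) * x 2 * hanti 2 2 0 + (-1/4) * x 3 * hanti 2 2 1 + (-3/4) * x 0 * hanti 2 2 2 + (-1/4) * x 1 * hanti 2 2 3 + (-1/4) * x 2 * hanti 3 3 0 + (1/4) * x 3 * hanti 3 3 1 + (-1/4) * x 0 * hanti 3 3 2 + (-3/4) * x 1 * hanti 3 3 3 + x 3 * hanti 1 0 0 + (-1) * x 1 * hanti 1 0 2 + (-1) * x 0 * hanti 2 1 1 + (-1) * x 2 * hanti 2 1 3 + (-1) * x 1 * hanti 3 0 0 + (-1) * x 3 * hanti 3 0 2 + x 3 * hanti 3 2 0 + (-1) * x 1 * hanti 3 2 2 + x 0 * h1 + x 0 * h2 + x 1 * h7 + x 1 * h8 + x 2 * h3 + x 2 * h4 + x 3 * h5 + x 3 * h6
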